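/- The distance in L¹(S¹, dx/(2π)) from the sawtooth function J₁ to the space of trigonometric polynomials of degree ≤ k−1 equals π/(2k). -/

import Mathlib

open Real MeasureTheory intervalIntegral

/-- The 2π-periodic sawtooth: `J₁(x) = x` for `x ∈ (−π, π)` and `J₁(π) = 0`. -/
noncomputable def J1fun (x : ℝ) : ℝ :=
  if x - 2 * π * round (x / (2 * π)) = -π then 0 else x - 2 * π * round (x / (2 * π))

/-- A real trigonometric polynomial of degree at most `n`. -/
def IsTrigPoly (n : ℕ) (p : ℝ → ℝ) : Prop :=
  ∃ a b : ℕ → ℝ, ∀ x : ℝ,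
    p x = ∑ j ∈ Finset.range (n + 1), (a j * Real.cos (j * x) + b j * Real.sin (j * x))

/-!
The nodes `xᵢ = -π + iπ/k` cut `[-π, π]` into `2k` intervals, and the square wave `s` equal to
`(-1)^(i+1)` on the `i`-th one is orthogonal to every trigonometric polynomial of degree `< k`,
because for `j < k` the alternating sums of `cos (j xᵢ)` and `sin (j xᵢ)` vanish. Hence
`∫ |x - p| ≥ ∫ (x - p) s = ∫ x s = π²/k` for every such `p`.

Equality holds for the sine polynomial `p*` interpolating `x` at the nodes. The error
`E = x - p*` is odd and vanishes at the `2k - 1` interior nodes, while `E' = Q(cos x)` with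
`deg Q ≤ k - 1` has at most `2k - 2` zeros in `[-π, π]`. By Rolle's theorem `E` has no other
zeros in `(-π, π)` and `E'` does not vanish at the nodes, so `E` changes sign at each node and
`|E| = s E`.
-/

open Finset Polynomial

theorem two_mul_sin_mul_sum_range_cos_add (α θ : ℝ) (n : ℕ) :
    2 * sin (θ / 2) * ∑ i ∈ range n, cos (α + i * θ) =
      sin (α + (n - 1 / 2) * θ) - sin (α - θ / 2) := by
  induction n with
  | zero => simp; ring_nf
  | succ n ih =>
    have h₁ : α + ((n + 1 : ℕ) - 1 / 2) * θ = (α + n * θ) + θ / 2 := by push_cast; ring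
    have h₂ : α + (n - 1 / 2) * θ = (α + n * θ) - θ / 2 := by ring
    rw [sum_range_succ, mul_add, ih, h₁, h₂, sin_add, sin_sub]
    ring

theorem two_mul_sin_mul_sum_range_sin_add (α θ : ℝ) (n : ℕ) :
    2 * sin (θ / 2) * ∑ i ∈ range n, sin (α + i * θ) =
      cos (α - θ / 2) - cos (α + (n - 1 / 2) * θ) := by
  induction n with
  | zero => simp; ring_nf
  | succ n ih =>
    have h₁ : α + ((n + 1 : ℕ) - 1 / 2) * θ = (α + n * θ) + θ / 2 := by push_cast; ring
    have h₂ : α + (n - 1 / 2) * θ = (α + n * θ) - θ / 2 := by ring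
    rw [sum_range_succ, mul_add, ih, h₁, h₂, cos_add, cos_sub (α + n * θ)]
    ring

theorem sum_range_cos_add_mul_eq_zero {α θ : ℝ} {n m : ℕ} (hθ : sin (θ / 2) ≠ 0)
    (hn : n * θ = m * (2 * π)) : ∑ i ∈ range n, cos (α + i * θ) = 0 := by
  have h := two_mul_sin_mul_sum_range_cos_add α θ n
  rw [show α + (n - 1 / 2) * θ = α - θ / 2 + m * (2 * π) by linear_combination hn,
    sin_add_nat_mul_two_pi, sub_self] at h
  simpa [hθ] using h

theorem sum_range_sin_add_mul_eq_zero {α θ : ℝ} {n m : ℕ} (hθ : sin (θ / 2) ≠ 0)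
    (hn : n * θ = m * (2 * π)) : ∑ i ∈ range n, sin (α + i * θ) = 0 := by
  have h := two_mul_sin_mul_sum_range_sin_add α θ n
  rw [show α + (n - 1 / 2) * θ = α - θ / 2 + m * (2 * π) by linear_combination hn,
    cos_add_nat_mul_two_pi, sub_self] at h
  simpa [hθ] using h

theorem sum_range_cos_nat_mul {θ : ℝ} {n : ℕ} (hθ : sin (θ / 2) ≠ 0)
    (hn : sin (n * θ) = 0) :
    ∑ j ∈ range n, cos (j * θ) = (1 - cos (n * θ)) / 2 := by
  have h := two_mul_sin_mul_sum_range_cos_add 0 θ n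
  rw [show (0 : ℝ) + (n - 1 / 2) * θ = n * θ - θ / 2 by ring, sin_sub, hn] at h
  simp only [zero_add, zero_sub, sin_neg] at h
  apply mul_left_cancel₀ (mul_ne_zero two_ne_zero hθ)
  rw [h]
  ring

theorem sin_mul_pi_div_ne_zero {m n : ℝ} (hm₀ : m ≠ 0) (hmn : |m| < n) :
    sin (m * π / n) ≠ 0 := by
  have hn : 0 < n := (abs_nonneg m).trans_lt hmn
  have hlt : |m * π / n| < π := by
    rw [abs_div, abs_mul, abs_of_pos pi_pos, abs_of_pos hn, div_lt_iff₀ hn]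
    exact mul_lt_mul_of_pos_right (by linarith) pi_pos |>.trans_eq (mul_comm _ _)
  rw [abs_lt] at hlt
  rw [Ne, sin_eq_zero_iff_of_lt_of_lt hlt.1 hlt.2]
  exact div_ne_zero (mul_ne_zero hm₀ pi_ne_zero) hn.ne'

theorem sum_range_sin_mul_sin {k i l : ℕ} (hi : i < k) (hl : 0 < l) (hlk : l < k) :
    ∑ j ∈ range k, sin (j * (i * π / k)) * sin (j * (l * π / k)) =
      if i = l then (k : ℝ) / 2 else 0 := by
  have hk : (k : ℝ) ≠ 0 := Nat.cast_ne_zero.2 (by omega)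
  have hterm (j : ℕ) : sin (j * (i * π / k)) * sin (j * (l * π / k)) =
      (cos (j * ((i - l) * π / k)) - cos (j * ((i + l) * π / k))) / 2 := by
    rw [show (j : ℝ) * ((i - l) * π / k) = j * (i * π / k) - j * (l * π / k) by ring,
      show (j : ℝ) * ((i + l) * π / k) = j * (i * π / k) + j * (l * π / k) by ring,
      ← two_mul_sin_mul_sin]
    ring
  have hsum {m : ℝ} (hm₀ : m ≠ 0) (hm : |m| < 2 * k) (hmk : sin (m * π) = 0) :
      ∑ j ∈ range k, cos (j * (m * π / k)) = (1 - cos (m * π)) / 2 := by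
    rw [sum_range_cos_nat_mul, mul_div_cancel₀ _ hk]
    · rw [div_div, mul_comm (k : ℝ) 2]; exact sin_mul_pi_div_ne_zero hm₀ hm
    · rwa [mul_div_cancel₀ _ hk]
  have hil : |((i : ℝ) + l)| < 2 * k := by
    rw [abs_of_nonneg (by positivity)]; exact_mod_cast (by omega : i + l < 2 * k)
  have hsin : sin ((i + l : ℝ) * π) = 0 := mod_cast sin_nat_mul_pi (i + l)
  rw [sum_congr rfl fun j _ => hterm j, ← sum_div, sum_sub_distrib,
    hsum (by positivity) hil hsin]
  split_ifs with h
  · subst h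
    simp only [sub_self, zero_mul, zero_div, mul_zero, cos_zero, sum_const, card_range,
      nsmul_eq_mul, mul_one]
    rw [show ((i : ℝ) + i) * π = (i : ℕ) * (2 * π) by ring, cos_nat_mul_two_pi]
    ring
  · have hne : ((i : ℝ) - l) ≠ 0 := sub_ne_zero.2 (by exact_mod_cast h)
    have hil' : |((i : ℝ) - l)| < 2 * k := by
      have : (i : ℝ) < k := by exact_mod_cast hi
      have : (l : ℝ) < k := by exact_mod_cast hlk
      rw [abs_sub_lt_iff]
      constructor <;>
        linarith [(i.cast_nonneg : (0 : ℝ) ≤ i), (l.cast_nonneg : (0 : ℝ) ≤ l)]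
    rw [hsum hne hil' (by rw [sub_mul, sin_sub, sin_nat_mul_pi, sin_nat_mul_pi]; ring),
      sub_mul, add_mul, cos_sub, cos_add, sin_nat_mul_pi]
    ring

theorem sum_range_two_mul_neg_one_pow_mul (c d : ℝ) (m : ℕ) :
    ∑ i ∈ range (2 * m), (-1) ^ i * (c + i * d) = -(m * d) := by
  induction m with
  | zero => simp
  | succ m ih =>
    rw [show 2 * (m + 1) = 2 * m + 1 + 1 by ring, sum_range_succ, sum_range_succ, ih,
      pow_succ, (even_two_mul m).neg_one_pow]
    push_cast
    ring

theorem sum_range_neg_one_pow_mul_sub (g : ℕ → ℝ) (n : ℕ) :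
    ∑ i ∈ range n, (-1) ^ (i + 1) * (g (i + 1) - g i) =
      2 * ∑ i ∈ range n, (-1) ^ i * g i + ((-1) ^ n * g n - g 0) := by
  induction n with
  | zero => simp
  | succ n ih =>
    rw [sum_range_succ, sum_range_succ (fun i => (-1) ^ i * g i), ih, pow_succ]
    ring

noncomputable section

def trigSum (n : ℕ) (a b : ℕ → ℝ) (x : ℝ) : ℝ :=
  ∑ j ∈ range n, (a j * cos (j * x) + b j * sin (j * x))

theorem continuous_trigSum (n : ℕ) (a b : ℕ → ℝ) : Continuous (trigSum n a b) := by
  unfold trigSum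
  fun_prop

theorem hasDerivAt_trigSum (n : ℕ) (a b : ℕ → ℝ) (x : ℝ) :
    HasDerivAt (trigSum n a b) (trigSum n (fun j => j * b j) (fun j => -(j * a j)) x) x := by
  refine HasDerivAt.fun_sum fun j _ => ?_
  have hjx : HasDerivAt (fun y : ℝ => (j : ℝ) * y) j x := by
    simpa using (hasDerivAt_id x).const_mul (j : ℝ)
  exact ((hjx.cos.const_mul (a j)).add (hjx.sin.const_mul (b j))).congr_deriv (by ring)

def cosPoly (n : ℕ) (a : ℕ → ℝ) : ℝ[X] :=
  ∑ j ∈ range n, C (a j) * Chebyshev.T ℝ j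

theorem eval_cos_cosPoly (n : ℕ) (a : ℕ → ℝ) (x : ℝ) :
    (cosPoly n a).eval (cos x) = trigSum n a 0 x := by
  simp [cosPoly, trigSum, eval_finsetSum, Chebyshev.T_real_cos]

theorem natDegree_cosPoly_le (n : ℕ) (a : ℕ → ℝ) : (cosPoly n a).natDegree ≤ n - 1 := by
  refine natDegree_sum_le_of_forall_le _ _ fun j hj => (natDegree_C_mul_le _ _).trans ?_
  rw [Chebyshev.natDegree_T]
  have := mem_range.1 hj
  omega

theorem Polynomial.exists_finset_eval_cos_eq_zero {Q : ℝ[X]} (hQ : Q ≠ 0) :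
    ∃ Z : Finset ℝ, Z.card ≤ 2 * Q.natDegree ∧
      ∀ x ∈ Set.Icc (-π) π, Q.eval (cos x) = 0 → x ∈ Z := by
  classical
  refine ⟨Q.roots.toFinset.biUnion fun c => {arccos c, -arccos c}, ?_, ?_⟩
  · calc _ ≤ ∑ c ∈ Q.roots.toFinset, ({arccos c, -arccos c} : Finset ℝ).card :=
          card_biUnion_le
      _ ≤ ∑ _c ∈ Q.roots.toFinset, 2 := sum_le_sum fun _ _ => card_le_two
      _ ≤ 2 * Q.natDegree := by
        rw [sum_const, smul_eq_mul, mul_comm]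
        exact Nat.mul_le_mul_left 2 ((Multiset.toFinset_card_le _).trans (card_roots' Q))
  · intro x hx hQx
    have habs : arccos (cos x) = |x| := by
      rw [← cos_abs, arccos_cos (abs_nonneg x) (abs_le.2 hx)]
    refine mem_biUnion.2 ⟨cos x, Multiset.mem_toFinset.2 ((mem_roots hQ).2 hQx), ?_⟩
    rw [habs]
    rcases abs_choice x with h | h <;> simp [h]

theorem card_zeros_le_card_sdiff_add_one {f : ℝ → ℝ} (hf : Continuous f) {s t : Finset ℝ}
    (hs : ∀ x ∈ s, f x = 0)
    (ht : ∀ x ∈ s, ∀ y ∈ s, ∀ z ∈ Set.Ioo x y, deriv f z = 0 → z ∈ t) :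
    s.card ≤ (t \ s).card + 1 :=
  card_le_sdiff_of_interleaved fun x hx y hy hxy _ =>
    let ⟨z, hz, hz'⟩ :=
      exists_deriv_eq_zero hxy hf.continuousOn ((hs x hx).trans (hs y hy).symm)
    ⟨z, ht x hx y hy z hz hz', hz⟩

theorem IsPreconnected.forall_pos_of_pos {X : Type*} [TopologicalSpace X] {s : Set X}
    (hs : IsPreconnected s) {f : X → ℝ} (hf : ContinuousOn f s) (hf₀ : ∀ x ∈ s, f x ≠ 0)
    {a : X} (ha : a ∈ s) (hfa : 0 < f a) : ∀ x ∈ s, 0 < f x := by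
  intro x hx
  by_contra! hfx
  obtain ⟨z, hz, hfz⟩ := hs.intermediate_value hx ha hf ⟨hfx, hfa.le⟩
  exact hf₀ z hz hfz

namespace Sawtooth

variable {k : ℕ}

def node (k i : ℕ) : ℝ :=
  -π + i * (π / k)

theorem node_zero : node k 0 = -π := by
  simp [node]

theorem node_two_mul (hk : 0 < k) : node k (2 * k) = π := by
  have hk' : (k : ℝ) ≠ 0 := Nat.cast_ne_zero.2 hk.ne'
  simp only [node]
  push_cast
  field_simp
  ring

theorem node_add_one (i : ℕ) : node k (i + 1) = node k i + π / k := by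
  simp only [node]
  push_cast
  ring

theorem strictMono_node (hk : 0 < k) : StrictMono (node k) := fun i j hij => by
  have : (i : ℝ) < j := by exact_mod_cast hij
  simp only [node]
  gcongr

theorem node_mem_Ioo (hk : 0 < k) {i : ℕ} (h0 : 0 < i) (hi : i < 2 * k) :
    node k i ∈ Set.Ioo (-π) π := by
  rw [← node_zero (k := k), ← node_two_mul hk]
  exact ⟨strictMono_node hk h0, strictMono_node hk hi⟩

def squareWaveIntegral (k : ℕ) (f : ℝ → ℝ) : ℝ :=
  ∑ i ∈ range (2 * k), (-1) ^ (i + 1) * ∫ x in node k i..node k (i + 1), f x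

theorem squareWaveIntegral_add {f g : ℝ → ℝ} (hf : Continuous f) (hg : Continuous g) :
    squareWaveIntegral k (fun x => f x + g x) =
      squareWaveIntegral k f + squareWaveIntegral k g := by
  simp only [squareWaveIntegral, ← sum_add_distrib, ← mul_add,
    integral_add (hf.intervalIntegrable _ _) (hg.intervalIntegrable _ _)]

theorem squareWaveIntegral_sub {f g : ℝ → ℝ} (hf : Continuous f) (hg : Continuous g) :
    squareWaveIntegral k (fun x => f x - g x) =
      squareWaveIntegral k f - squareWaveIntegral k g := by
  simp only [squareWaveIntegral, ← sum_sub_distrib, ← mul_sub,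
    integral_sub (hf.intervalIntegrable _ _) (hg.intervalIntegrable _ _)]

theorem squareWaveIntegral_const_mul (c : ℝ) (f : ℝ → ℝ) :
    squareWaveIntegral k (fun x => c * f x) = c * squareWaveIntegral k f := by
  simp only [squareWaveIntegral, intervalIntegral.integral_const_mul, mul_sum]
  exact sum_congr rfl fun _ _ => by ring

theorem squareWaveIntegral_finset_sum {ι : Type*} (s : Finset ι) {f : ι → ℝ → ℝ}
    (hf : ∀ j ∈ s, Continuous (f j)) :
    squareWaveIntegral k (fun x => ∑ j ∈ s, f j x) =
      ∑ j ∈ s, squareWaveIntegral k (f j) := by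
  simp only [squareWaveIntegral,
    intervalIntegral.integral_finsetSum fun j hj => (hf j hj).intervalIntegrable _ _, mul_sum]
  exact sum_comm

theorem squareWaveIntegral_affine (hk : 0 < k) (u v : ℝ) :
    squareWaveIntegral k (fun x => u + v * x) = v * π ^ 2 / k := by
  have hk' : (k : ℝ) ≠ 0 := Nat.cast_ne_zero.2 hk.ne'
  have hint (i : ℕ) : ∫ x in node k i..node k (i + 1), (u + v * x) =
      π / k * (u + v * (-π + π / (2 * k)) + i * (v * (π / k))) := by
    rw [integral_add intervalIntegrable_const ((continuous_const_mul v).intervalIntegrable _ _),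
      intervalIntegral.integral_const, intervalIntegral.integral_const_mul, integral_id,
      node_add_one]
    simp only [node, smul_eq_mul]
    field_simp
    ring
  calc squareWaveIntegral k (fun x => u + v * x)
      = -(π / k) * ∑ i ∈ range (2 * k),
          (-1) ^ i * (u + v * (-π + π / (2 * k)) + i * (v * (π / k))) := by
        simp only [squareWaveIntegral, hint, mul_sum]
        exact sum_congr rfl fun i _ => by ring
    _ = v * π ^ 2 / k := by
        rw [sum_range_two_mul_neg_one_pow_mul]
        field_simp

theorem squareWaveIntegral_eq_of_hasDerivAt (hk : 0 < k) {f G : ℝ → ℝ}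
    (hG : ∀ x, HasDerivAt G (f x) x) (hf : Continuous f) :
    squareWaveIntegral k f =
      2 * ∑ i ∈ range (2 * k), (-1) ^ i * G (node k i) + (G π - G (-π)) := by
  simp only [squareWaveIntegral,
    integral_eq_sub_of_hasDerivAt (fun x _ => hG x) (hf.intervalIntegrable _ _)]
  rw [sum_range_neg_one_pow_mul_sub (fun i => G (node k i)), (even_two_mul k).neg_one_pow,
    one_mul, node_two_mul hk, node_zero]

theorem sin_half_nat_mul_pi_div_add_pi_pos {j : ℕ} (hj : j < k) :
    0 < sin ((j * (π / k) + π) / 2) := by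
  have hk : (0 : ℝ) < k := by exact_mod_cast (show 0 < k by omega)
  have hjk : (j : ℝ) * (π / k) < π := by
    rw [← mul_div_assoc, div_lt_iff₀ (by positivity), mul_comm π]
    exact mul_lt_mul_of_pos_right (by exact_mod_cast hj) pi_pos
  exact sin_pos_of_pos_of_lt_pi (by positivity) (by linarith)

theorem sum_range_neg_one_pow_mul_cos_node {j : ℕ} (hj : j < k) :
    ∑ i ∈ range (2 * k), (-1) ^ i * cos (j * node k i) = 0 := by
  have hk : (k : ℝ) ≠ 0 := Nat.cast_ne_zero.2 (by omega)
  have hterm (i : ℕ) :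
      (-1) ^ i * cos (j * node k i) = cos (-(j * π) + i * (j * (π / k) + π)) := by
    rw [← cos_add_nat_mul_pi, node]
    ring_nf
  rw [sum_congr rfl fun i _ => hterm i]
  refine sum_range_cos_add_mul_eq_zero (m := j + k)
    (sin_half_nat_mul_pi_div_add_pi_pos hj).ne' ?_
  push_cast
  field_simp

theorem sum_range_neg_one_pow_mul_sin_node {j : ℕ} (hj : j < k) :
    ∑ i ∈ range (2 * k), (-1) ^ i * sin (j * node k i) = 0 := by
  have hk : (k : ℝ) ≠ 0 := Nat.cast_ne_zero.2 (by omega)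
  have hterm (i : ℕ) :
      (-1) ^ i * sin (j * node k i) = sin (-(j * π) + i * (j * (π / k) + π)) := by
    rw [← sin_add_nat_mul_pi, node]
    ring_nf
  rw [sum_congr rfl fun i _ => hterm i]
  refine sum_range_sin_add_mul_eq_zero (m := j + k)
    (sin_half_nat_mul_pi_div_add_pi_pos hj).ne' ?_
  push_cast
  field_simp

theorem squareWaveIntegral_cos (hk : 0 < k) {j : ℕ} (hj : j < k) :
    squareWaveIntegral k (fun x => cos (j * x)) = 0 := by
  rcases Nat.eq_zero_or_pos j with rfl | hj₀
  · simpa using squareWaveIntegral_affine hk 1 0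
  have hj' : (j : ℝ) ≠ 0 := Nat.cast_ne_zero.2 hj₀.ne'
  rw [squareWaveIntegral_eq_of_hasDerivAt hk (G := fun x => sin (j * x) / j) (fun x => ?_)
    (by fun_prop)]
  · simp only [mul_div_assoc', ← sum_div, sum_range_neg_one_pow_mul_sin_node hj, mul_neg,
      sin_neg, sin_nat_mul_pi]
    simp
  · simpa [hj'] using ((hasDerivAt_id' x).const_mul (j : ℝ)).sin.div_const (j : ℝ)

theorem squareWaveIntegral_sin (hk : 0 < k) {j : ℕ} (hj : j < k) :
    squareWaveIntegral k (fun x => sin (j * x)) = 0 := by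
  rcases Nat.eq_zero_or_pos j with rfl | hj₀
  · simp [squareWaveIntegral]
  have hj' : (j : ℝ) ≠ 0 := Nat.cast_ne_zero.2 hj₀.ne'
  rw [squareWaveIntegral_eq_of_hasDerivAt hk (G := fun x => -cos (j * x) / j) (fun x => ?_)
    (by fun_prop)]
  · simp only [neg_div, mul_neg, sum_neg_distrib, mul_div_assoc', ← sum_div,
      sum_range_neg_one_pow_mul_cos_node hj, cos_neg]
    simp
  · simpa [hj'] using ((hasDerivAt_id' x).const_mul (j : ℝ)).cos.neg.div_const (j : ℝ)

theorem squareWaveIntegral_trigSum (hk : 0 < k) {n : ℕ} (hn : n ≤ k) (a b : ℕ → ℝ) :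
    squareWaveIntegral k (trigSum n a b) = 0 := by
  unfold trigSum
  rw [squareWaveIntegral_finset_sum _ fun j _ => by fun_prop]
  refine sum_eq_zero fun j hj => ?_
  have hjk : j < k := (mem_range.1 hj).trans_le hn
  rw [squareWaveIntegral_add (by fun_prop) (by fun_prop), squareWaveIntegral_const_mul,
    squareWaveIntegral_const_mul, squareWaveIntegral_cos hk hjk, squareWaveIntegral_sin hk hjk,
    mul_zero, mul_zero, add_zero]

theorem squareWaveIntegral_id_sub_trigSum (hk : 0 < k) (a b : ℕ → ℝ) :
    squareWaveIntegral k (fun x => x - trigSum k a b x) = π ^ 2 / k := by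
  rw [squareWaveIntegral_sub continuous_id' (continuous_trigSum _ _ _),
    squareWaveIntegral_trigSum hk le_rfl, sub_zero]
  simpa using squareWaveIntegral_affine hk 0 1

theorem integral_eq_sum_integral_node (hk : 0 < k) {f : ℝ → ℝ} (hf : Continuous f) :
    ∫ x in -π..π, f x = ∑ i ∈ range (2 * k), ∫ x in node k i..node k (i + 1), f x := by
  rw [sum_integral_adjacent_intervals fun i _ => hf.intervalIntegrable _ _, node_zero,
    node_two_mul hk]

theorem abs_squareWaveIntegral_le (hk : 0 < k) {f : ℝ → ℝ} (hf : Continuous f) :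
    |squareWaveIntegral k f| ≤ ∫ x in -π..π, |f x| := by
  rw [integral_eq_sum_integral_node hk hf.abs]
  refine (abs_sum_le_sum_abs _ _).trans (sum_le_sum fun i _ => ?_)
  rw [abs_mul, abs_neg_one_pow, one_mul]
  exact abs_integral_le_integral_abs ((strictMono_node hk).monotone (Nat.le_succ i))

theorem integral_abs_eq_squareWaveIntegral (hk : 0 < k) {f : ℝ → ℝ} (hf : Continuous f)
    (hsign : ∀ i < 2 * k, ∀ x ∈ Set.Ioo (node k i) (node k (i + 1)),
      0 ≤ (-1) ^ (i + 1) * f x) :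
    ∫ x in -π..π, |f x| = squareWaveIntegral k f := by
  rw [integral_eq_sum_integral_node hk hf.abs, squareWaveIntegral]
  refine sum_congr rfl fun i hi => ?_
  rw [← intervalIntegral.integral_const_mul]
  refine integral_congr_Ioo_of_le ((strictMono_node hk).monotone (Nat.le_succ i)) fun x hx => ?_
  rw [← abs_of_nonneg (hsign i (mem_range.1 hi) x hx), abs_mul, abs_neg_one_pow, one_mul]

theorem sq_pi_div_le_integral_abs (hk : 0 < k) (a b : ℕ → ℝ) :
    π ^ 2 / k ≤ ∫ x in -π..π, |x - trigSum k a b x| := by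
  rw [← squareWaveIntegral_id_sub_trigSum hk a b]
  exact (le_abs_self _).trans
    (abs_squareWaveIntegral_le hk (continuous_id.sub (continuous_trigSum _ _ _)))

/-- The discrete sine transform of `x ↦ x` at the points `lπ/k`, `l < k`; see
`bestApprox_nat_mul_pi_div`. -/
def bestApproxCoeff (k j : ℕ) : ℝ :=
  2 * π / k ^ 2 * ∑ i ∈ range k, i * sin (j * (i * π / k))

def bestApprox (k : ℕ) : ℝ → ℝ :=
  trigSum k 0 (bestApproxCoeff k)

def approxError (k : ℕ) (x : ℝ) : ℝ :=
  x - bestApprox k x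

theorem bestApprox_nat_mul_pi_div {l : ℕ} (hlk : l < k) :
    bestApprox k (l * π / k) = l * π / k := by
  rcases Nat.eq_zero_or_pos l with rfl | hl
  · simp [bestApprox, trigSum]
  have hk : (k : ℝ) ≠ 0 := Nat.cast_ne_zero.2 (by omega)
  calc bestApprox k (l * π / k)
      = 2 * π / k ^ 2 * ∑ i ∈ range k,
          i * ∑ j ∈ range k, sin (j * (i * π / k)) * sin (j * (l * π / k)) := by
        simp only [bestApprox, trigSum, bestApproxCoeff, Pi.zero_apply, zero_mul, zero_add,
          mul_sum, sum_mul]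
        rw [sum_comm]
        exact sum_congr rfl fun _ _ => sum_congr rfl fun _ _ => by ring
    _ = 2 * π / k ^ 2 * (l * (k / 2)) := by
        rw [sum_congr rfl fun i hi => by rw [sum_range_sin_mul_sin (mem_range.1 hi) hl hlk]]
        simp [mul_ite, hlk]
    _ = l * π / k := by field_simp

theorem bestApprox_neg (x : ℝ) : bestApprox k (-x) = -bestApprox k x := by
  simp [bestApprox, trigSum, ← sum_neg_distrib]

theorem approxError_neg (x : ℝ) : approxError k (-x) = -approxError k x := by
  simp only [approxError, bestApprox_neg]
  ring

theorem approxError_zero : approxError k 0 = 0 := by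
  simp [approxError, bestApprox, trigSum]

theorem approxError_pi : approxError k π = π := by
  simp [approxError, bestApprox, trigSum, sin_nat_mul_pi]

theorem approxError_nat_mul_pi_div {l : ℕ} (hlk : l < k) : approxError k (l * π / k) = 0 := by
  rw [approxError, bestApprox_nat_mul_pi_div hlk, sub_self]

theorem approxError_node (hk : 0 < k) {i : ℕ} (h0 : 0 < i) (hi : i < 2 * k) :
    approxError k (node k i) = 0 := by
  have hk' : (k : ℝ) ≠ 0 := Nat.cast_ne_zero.2 hk.ne'
  rcases le_or_gt k i with hki | hik
  · have : node k i = (i - k : ℕ) * π / k := by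
      rw [node, Nat.cast_sub hki]; field_simp; ring
    rw [this, approxError_nat_mul_pi_div (by omega)]
  · have : node k i = -((k - i : ℕ) * π / k) := by
      rw [node, Nat.cast_sub hik.le]; field_simp; ring
    rw [this, approxError_neg, approxError_nat_mul_pi_div (by omega), neg_zero]

theorem continuous_approxError : Continuous (approxError k) :=
  continuous_id.sub (continuous_trigSum _ _ _)

theorem hasDerivAt_approxError (x : ℝ) :
    HasDerivAt (approxError k)
      ((1 - cosPoly k fun j => j * bestApproxCoeff k j).eval (cos x)) x := by
  refine ((hasDerivAt_id x).sub (hasDerivAt_trigSum k 0 (bestApproxCoeff k) x)).congr_deriv ?_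
  simp [eval_cos_cosPoly, trigSum]

theorem exists_finset_deriv_approxError_eq_zero :
    ∃ Z : Finset ℝ, Z.card ≤ 2 * (k - 1) ∧
      ∀ x ∈ Set.Icc (-π) π, deriv (approxError k) x = 0 → x ∈ Z := by
  set Q := 1 - cosPoly k fun j => j * bestApproxCoeff k j
  have hderiv (x : ℝ) : deriv (approxError k) x = Q.eval (cos x) :=
    (hasDerivAt_approxError x).deriv
  have hQ : Q ≠ 0 := by
    intro hQ
    have := is_const_of_deriv_eq_zero
      (fun x => (hasDerivAt_approxError (k := k) x).differentiableAt)
      (fun x => by rw [hderiv, hQ, eval_zero]) π 0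
    rw [approxError_pi, approxError_zero] at this
    exact pi_ne_zero this
  have hdeg : Q.natDegree ≤ k - 1 :=
    (natDegree_sub_le _ _).trans (by simpa using natDegree_cosPoly_le k _)
  obtain ⟨Z, hZ, hmem⟩ := exists_finset_eval_cos_eq_zero hQ
  exact ⟨Z, hZ.trans (by omega), fun x hx h => hmem x hx (hderiv x ▸ h)⟩

def interiorNodes (k : ℕ) : Finset ℝ :=
  (Finset.Ioo 0 (2 * k)).image (node k)

theorem card_interiorNodes (hk : 0 < k) : (interiorNodes k).card = 2 * k - 1 := by
  rw [interiorNodes, card_image_of_injective _ (strictMono_node hk).injective, Nat.card_Ioo,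
    Nat.sub_zero]

theorem mem_interiorNodes {x : ℝ} :
    x ∈ interiorNodes k ↔ ∃ i, 0 < i ∧ i < 2 * k ∧ node k i = x := by
  simp [interiorNodes, and_assoc]

theorem approxError_eq_zero_of_mem_interiorNodes (hk : 0 < k) {x : ℝ}
    (hx : x ∈ interiorNodes k) : x ∈ Set.Ioo (-π) π ∧ approxError k x = 0 := by
  obtain ⟨i, h0, hi, rfl⟩ := mem_interiorNodes.1 hx
  exact ⟨node_mem_Ioo hk h0 hi, approxError_node hk h0 hi⟩

theorem card_le_of_approxError_eq_zero {s Z : Finset ℝ}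
    (hZ : ∀ x ∈ Set.Icc (-π) π, deriv (approxError k) x = 0 → x ∈ Z)
    (hs : ∀ x ∈ s, x ∈ Set.Ioo (-π) π ∧ approxError k x = 0) :
    s.card ≤ (Z \ s).card + 1 :=
  card_zeros_le_card_sdiff_add_one continuous_approxError (fun x hx => (hs x hx).2)
    fun x hx y hy z hz => hZ z ⟨((hs x hx).1.1.trans hz.1).le, (hz.2.trans (hs y hy).1.2).le⟩

theorem mem_interiorNodes_of_approxError_eq_zero (hk : 0 < k) {y : ℝ}
    (hy : y ∈ Set.Ioo (-π) π) (hy₀ : approxError k y = 0) : y ∈ interiorNodes k := by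
  by_contra hy'
  obtain ⟨Z, hZ, hmem⟩ := exists_finset_deriv_approxError_eq_zero (k := k)
  have hcard := card_le_of_approxError_eq_zero hmem (s := insert y (interiorNodes k)) <| by
    intro x hx
    rcases mem_insert.1 hx with rfl | hx
    exacts [⟨hy, hy₀⟩, approxError_eq_zero_of_mem_interiorNodes hk hx]
  rw [card_insert_of_notMem hy', card_interiorNodes hk] at hcard
  have := card_le_card (sdiff_subset (s := Z) (t := insert y (interiorNodes k)))
  omega

theorem deriv_approxError_node_ne_zero (hk : 0 < k) {i : ℕ} (h0 : 0 < i) (hi : i < 2 * k) :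
    deriv (approxError k) (node k i) ≠ 0 := by
  intro hd
  obtain ⟨Z, hZ, hmem⟩ := exists_finset_deriv_approxError_eq_zero (k := k)
  have hcard := card_le_of_approxError_eq_zero hmem (s := interiorNodes k)
    fun x hx => approxError_eq_zero_of_mem_interiorNodes hk hx
  have hinter : node k i ∈ Z ∩ interiorNodes k :=
    mem_inter.2 ⟨hmem _ (Set.Ioo_subset_Icc_self (node_mem_Ioo hk h0 hi)) hd,
      mem_interiorNodes.2 ⟨i, h0, hi, rfl⟩⟩
  have := card_sdiff_add_card_inter Z (interiorNodes k)
  have := card_pos.2 ⟨_, hinter⟩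
  rw [card_interiorNodes hk] at hcard
  omega

theorem Ioo_node_subset (hk : 0 < k) {i : ℕ} (hi : i < 2 * k) :
    Set.Ioo (node k i) (node k (i + 1)) ⊆ Set.Ioo (-π) π := by
  rw [← node_zero (k := k), ← node_two_mul hk]
  exact Set.Ioo_subset_Ioo ((strictMono_node hk).monotone (Nat.zero_le i))
    ((strictMono_node hk).monotone hi)

theorem approxError_ne_zero (hk : 0 < k) {i : ℕ} (hi : i < 2 * k) {x : ℝ}
    (hx : x ∈ Set.Ioo (node k i) (node k (i + 1))) : approxError k x ≠ 0 := by
  intro hx₀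
  obtain ⟨m, -, -, rfl⟩ := mem_interiorNodes.1
    (mem_interiorNodes_of_approxError_eq_zero hk (Ioo_node_subset hk hi hx) hx₀)
  have h₁ := (strictMono_node hk).lt_iff_lt.1 hx.1
  have h₂ := (strictMono_node hk).lt_iff_lt.1 hx.2
  omega

theorem approxError_pos_of_mem_last_Ioo (hk : 0 < k) {x : ℝ}
    (hx : x ∈ Set.Ioo (node k (2 * k - 1)) π) : 0 < approxError k x := by
  have hi : 2 * k - 1 + 1 = 2 * k := by omega
  have hne (y) (hy : y ∈ Set.Ioo (node k (2 * k - 1)) π) : approxError k y ≠ 0 :=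
    approxError_ne_zero hk (i := 2 * k - 1) (by omega) (by rwa [hi, node_two_mul hk])
  by_contra! hx₀
  have hneg := isPreconnected_Ioo.forall_pos_of_pos continuous_approxError.neg.continuousOn
    (fun y hy => neg_ne_zero.2 (hne y hy)) hx (neg_pos.2 (hx₀.lt_of_ne (hne x hx)))
  have hclosed : closure (Set.Ioo (node k (2 * k - 1)) π) ⊆ {y | approxError k y ≤ 0} :=
    (isClosed_le continuous_approxError continuous_const).closure_subset_iff.2
      fun y hy => by simpa using (hneg y hy).le
  have hlt : node k (2 * k - 1) < π := node_two_mul hk ▸ strictMono_node hk (by omega)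
  rw [closure_Ioo hlt.ne] at hclosed
  have : approxError k π ≤ 0 := hclosed ⟨hlt.le, le_rfl⟩
  linarith [approxError_pi (k := k), pi_pos]

theorem neg_one_pow_mul_approxError_pos_of_succ (hk : 0 < k) {i : ℕ} (hi : i + 1 < 2 * k)
    (hsucc : ∀ x ∈ Set.Ioo (node k (i + 1)) (node k (i + 2)),
      0 < (-1) ^ (i + 2) * approxError k x)
    {x : ℝ} (hx : x ∈ Set.Ioo (node k i) (node k (i + 1))) :
    0 < (-1) ^ (i + 1) * approxError k x := by
  by_contra! hx₀
  have hsign {n : ℕ} : ((-1) ^ n : ℝ) ≠ 0 := pow_ne_zero _ (by norm_num)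
  have hne (y) (hy : y ∈ Set.Ioo (node k i) (node k (i + 1))) :
      (-1) ^ (i + 2) * approxError k y ≠ 0 :=
    mul_ne_zero hsign (approxError_ne_zero hk (by omega) hy)
  have hx₁ : (-1) ^ (i + 1) * approxError k x ≠ 0 :=
    mul_ne_zero hsign (approxError_ne_zero hk (by omega) hx)
  have hprev := isPreconnected_Ioo.forall_pos_of_pos
    (f := fun y => (-1) ^ (i + 2) * approxError k y)
    (continuous_const.mul continuous_approxError).continuousOn hne hx <| by
      show 0 < (-1) ^ (i + 2) * approxError k x
      rw [pow_succ]
      linarith [hx₁.lt_of_le hx₀]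
  have hv := approxError_node hk (Nat.succ_pos i) hi
  -- without a sign change, the zero `node k (i + 1)` is a local extremum
  have hmin : IsLocalMin (fun y => (-1) ^ (i + 2) * approxError k y) (node k (i + 1)) := by
    refine Filter.eventually_of_mem (Ioo_mem_nhds (strictMono_node hk (Nat.lt_succ_self i))
      (strictMono_node hk (Nat.lt_succ_self (i + 1)))) fun y hy => ?_
    show (-1) ^ (i + 2) * approxError k (node k (i + 1)) ≤ (-1) ^ (i + 2) * approxError k y
    rw [hv, mul_zero]
    rcases lt_trichotomy y (node k (i + 1)) with h | h | h
    exacts [(hprev y ⟨hy.1, h⟩).le, by rw [h, hv, mul_zero], (hsucc y ⟨h, hy.2⟩).le]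
  have := hmin.deriv_eq_zero
  rw [deriv_const_mul_field'] at this
  exact deriv_approxError_node_ne_zero hk (Nat.succ_pos i) hi
    ((mul_eq_zero.1 this).resolve_left hsign)

theorem neg_one_pow_mul_approxError_pos (hk : 0 < k) {i : ℕ} (hi : i < 2 * k) {x : ℝ}
    (hx : x ∈ Set.Ioo (node k i) (node k (i + 1))) :
    0 < (-1) ^ (i + 1) * approxError k x := by
  obtain hi' : i ≤ 2 * k - 1 := by omega
  induction hi' using Nat.decreasingInduction generalizing x with
  | self =>
    rw [Nat.sub_add_cancel (by omega : 1 ≤ 2 * k), node_two_mul hk] at hx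
    rw [Nat.sub_add_cancel (by omega : 1 ≤ 2 * k), (even_two_mul k).neg_one_pow, one_mul]
    exact approxError_pos_of_mem_last_Ioo hk hx
  | of_succ i hi' ih =>
    exact neg_one_pow_mul_approxError_pos_of_succ hk (by omega) (fun y hy => ih (by omega) hy) hx

theorem integral_abs_sub_bestApprox (hk : 0 < k) :
    ∫ x in -π..π, |x - bestApprox k x| = π ^ 2 / k := by
  exact (integral_abs_eq_squareWaveIntegral hk continuous_approxError
    fun i hi x hx => (neg_one_pow_mul_approxError_pos hk hi hx).le).trans
    (squareWaveIntegral_id_sub_trigSum hk 0 (bestApproxCoeff k))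

end Sawtooth

theorem J1fun_eq_self {x : ℝ} (hx : x ∈ Set.Ioo (-π) π) : J1fun x = x := by
  have hround : round (x / (2 * π)) = 0 := by
    rw [round_eq_zero_iff, Set.mem_Ico, le_div_iff₀ two_pi_pos, div_lt_iff₀ two_pi_pos]
    constructor <;> linarith [hx.1, hx.2]
  simp [J1fun, hround, hx.1.ne']

theorem integral_abs_J1fun_sub (p : ℝ → ℝ) :
    ∫ x in -π..π, |J1fun x - p x| = ∫ x in -π..π, |x - p x| :=
  integral_congr_Ioo_of_le (by linarith [pi_pos]) fun x hx => by rw [J1fun_eq_self hx]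

end

/-- **L¹ distance from the sawtooth to trigonometric polynomials.**
The distance in `L¹(S¹, dx/2π)` from `J₁` to the space of trigonometric
polynomials of degree ≤ k−1 equals `π/(2k)`. -/
theorem sawtooth_l1_distance (k : ℕ) (hk : 1 ≤ k) :
    sInf ((fun p : ℝ → ℝ => (1 / (2 * π)) * ∫ x in (-π)..π, |J1fun x - p x|) ''
        {p : ℝ → ℝ | IsTrigPoly (k - 1) p}) = π / (2 * k) := by
  have hdeg : k - 1 + 1 = k := Nat.sub_add_cancel hk
  refine IsLeast.csInf_eq ⟨⟨Sawtooth.bestApprox k,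
    ⟨0, Sawtooth.bestApproxCoeff k, fun x => by rw [hdeg]; rfl⟩, ?_⟩, ?_⟩
  · dsimp only
    rw [integral_abs_J1fun_sub, Sawtooth.integral_abs_sub_bestApprox hk]
    field_simp
  · rintro _ ⟨p, ⟨a, b, hp⟩, rfl⟩
    rw [hdeg] at hp
    obtain rfl : p = trigSum k a b := funext hp
    dsimp only
    rw [integral_abs_J1fun_sub]
    calc π / (2 * k) = 1 / (2 * π) * (π ^ 2 / k) := by field_simp
      _ ≤ _ := by gcongr; exact Sawtooth.sq_pi_div_le_integral_abs hk a b
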